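/- Let A be an n×n real matrix with spectral radius at most 1 and ‖A‖₂ ≤ M, and let H be an n×r real matrix with ‖H‖₂ ≤ M, where r ≤ n. Define the controllability Gramian Γ_k(A,H) = Σ_{i=0}^{k-1} A^i H H' (A')^i. Then ‖Γ_k(A,H)‖₂ ≤ e^{2n-2} · k^{2n-1} · max{M^{2n}, 1}. -/

import Mathlib

open Matrix

/-- The spectral norm (ℓ² operator norm) of a real matrix. -/
noncomputable def specNorm {m n : Type*} [Fintype m] [Fintype n] [DecidableEq n]
    (A : Matrix m n ℝ) : ℝ :=
  ‖LinearMap.toContinuousLinearMap (Matrix.toEuclideanLin A)‖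

/-- The controllability Gramian `Γ_k(A,H) = Σ_{i=0}^{k-1} Aⁱ H Hᵀ (Aᵀ)ⁱ`. -/
noncomputable def gramian {n r : ℕ} (A : Matrix (Fin n) (Fin n) ℝ)
    (H : Matrix (Fin n) (Fin r) ℝ) (k : ℕ) : Matrix (Fin n) (Fin n) ℝ :=
  ∑ i ∈ Finset.range k, A ^ i * H * Hᵀ * (Aᵀ) ^ i

/-!
If `μ₁, …, μₙ` are the complex eigenvalues of `A` counted with multiplicity, Cayley–Hamilton gives
`∏ₜ (A - μₜ) = 0`. Peeling off one factor at a time with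
`aⁱ = μⁱ + ∑_{s<i} μ^(i-1-s) (a - μ) aˢ` and summing the resulting bounds with the hockey-stick
identity shows `‖Aⁱ‖ ≤ ∑_{j<n} C(i,j) (‖A‖ + 1)ʲ` once every `|μₜ| ≤ 1`; since
`∑_{j≤d} C(i,j) ≤ (e i / d)ᵈ`, this is at most `(e i max(M,1))ⁿ⁻¹`. Complexifying `A` does not
change its spectral norm. Each term of the Gramian has norm `‖AⁱH‖² ≤ (‖Aⁱ‖ M)²`, and there are
`k` of them.
-/

open Finset Polynomial Real WithLp
open scoped Matrix.Norms.L2Operator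

theorem Nat.sum_range_choose_eq_choose_succ (i j : ℕ) :
    ∑ s ∈ range i, s.choose j = i.choose (j + 1) := by
  induction i with
  | zero => simp
  | succ i ih => rw [sum_range_succ, ih, Nat.choose_succ_succ', add_comm]

section NormedAlgebra

variable {𝕜 𝔸 : Type*} [NormedField 𝕜] [NormedRing 𝔸] [NormedAlgebra 𝕜 𝔸]

theorem mul_pow_eq_smul_add_sum (a r : 𝔸) (μ : 𝕜) (i : ℕ) :
    r * a ^ i = μ ^ i • r +
      ∑ s ∈ range i, μ ^ (i - 1 - s) • (r * (a - algebraMap 𝕜 𝔸 μ) * a ^ s) := by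
  have h := (Algebra.commute_algebraMap_right μ a).mul_geom_sum₂ i
  rw [eq_sub_iff_add_eq, ← map_pow] at h
  rw [← h, mul_add, Finset.mul_sum, Finset.mul_sum, add_comm]
  congr 1
  · rw [← Algebra.commutes, Algebra.smul_def]
  · refine sum_congr rfl fun s _ => ?_
    rw [← map_pow, ← Algebra.commutes, ← Algebra.smul_def]
    simp only [mul_smul_comm, mul_assoc]

theorem norm_mul_pow_le_of_mul_prod_eq_zero {a : 𝔸} {c : ℝ} (l : List 𝕜)
    (hl : ∀ μ ∈ l, ‖μ‖ ≤ 1) (hc : ∀ μ ∈ l, ‖a - algebraMap 𝕜 𝔸 μ‖ ≤ c) {r : 𝔸}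
    (hr : r * (l.map fun μ => a - algebraMap 𝕜 𝔸 μ).prod = 0) (i : ℕ) :
    ‖r * a ^ i‖ ≤ (∑ j ∈ range l.length, (i.choose j : ℝ) * c ^ j) * ‖r‖ := by
  induction l generalizing r i with
  | nil => simp_all
  | cons μ l ih =>
    simp only [List.forall_mem_cons] at hl hc
    have hc0 : 0 ≤ c := (norm_nonneg _).trans hc.1
    have hr' : r * (a - algebraMap 𝕜 𝔸 μ) * (l.map fun μ => a - algebraMap 𝕜 𝔸 μ).prod = 0 := by
      simpa [mul_assoc] using hr
    have hμ : ∀ p, ‖μ ^ p‖ ≤ 1 := fun p => by rw [norm_pow]; exact pow_le_one₀ (norm_nonneg _) hl.1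
    calc ‖r * a ^ i‖
        ≤ ‖r‖ + ∑ s ∈ range i, (∑ j ∈ range l.length, (s.choose j : ℝ) * c ^ j) * (c * ‖r‖) := by
          rw [mul_pow_eq_smul_add_sum a r μ i]
          refine (norm_add_le _ _).trans (add_le_add ?_ ((norm_sum_le _ _).trans ?_))
          · exact (norm_smul_le _ _).trans (mul_le_of_le_one_left (norm_nonneg _) (hμ i))
          · refine sum_le_sum fun s _ => (norm_smul_le _ _).trans ?_
            refine (mul_le_of_le_one_left (norm_nonneg _) (hμ _)).trans ?_
            refine (ih hl.2 hc.2 hr' s).trans (mul_le_mul_of_nonneg_left ?_ ?_)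
            · exact (norm_mul_le _ _).trans (by rw [mul_comm]; gcongr; exact hc.1)
            · positivity
      _ = (∑ j ∈ range (l.length + 1), (i.choose j : ℝ) * c ^ j) * ‖r‖ := by
          simp only [sum_range_succ', ← sum_mul, Nat.choose_zero_right, Nat.cast_one, pow_zero,
            mul_one, add_mul, one_mul, pow_succ]
          rw [sum_comm, add_comm]
          simp only [← sum_mul, ← Nat.cast_sum, Nat.sum_range_choose_eq_choose_succ]
          congr 1
          simp only [sum_mul]
          exact sum_congr rfl fun _ _ => by ring

end NormedAlgebra

theorem sum_range_succ_choose_le_exp_mul_div_pow {d i : ℕ} (hd : 0 < d) (hdi : d ≤ i) :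
    ∑ j ∈ range (d + 1), (i.choose j : ℝ) ≤ (exp 1 * i / d) ^ d := by
  have hi : (0 : ℝ) < i := by exact_mod_cast hd.trans_le hdi
  set t : ℝ := d / i
  have ht0 : 0 < t := by positivity
  have ht1 : t ≤ 1 := div_le_one_of_le₀ (by exact_mod_cast hdi) hi.le
  have key : (∑ j ∈ range (d + 1), (i.choose j : ℝ)) * t ^ d ≤ exp 1 ^ d :=
    calc (∑ j ∈ range (d + 1), (i.choose j : ℝ)) * t ^ d
        ≤ ∑ j ∈ range (d + 1), (i.choose j : ℝ) * t ^ j := by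
          rw [sum_mul]
          refine sum_le_sum fun j hj => mul_le_mul_of_nonneg_left ?_ (Nat.cast_nonneg _)
          exact pow_le_pow_of_le_one ht0.le ht1 (mem_range_succ_iff.mp hj)
      _ ≤ ∑ j ∈ range (i + 1), (i.choose j : ℝ) * t ^ j :=
          sum_le_sum_of_subset_of_nonneg (range_subset_range.mpr (by omega))
            fun _ _ _ => by positivity
      _ = (t + 1) ^ i := by
          rw [add_pow]
          exact sum_congr rfl fun j _ => by ring
      _ ≤ exp t ^ i := by gcongr; exact add_one_le_exp t
      _ = exp 1 ^ d := by
          rw [← exp_nat_mul, ← exp_nat_mul, mul_one]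
          exact congrArg exp (mul_div_cancel₀ _ hi.ne')
  calc _ ≤ exp 1 ^ d / t ^ d := (le_div_iff₀ (by positivity)).mpr key
    _ = _ := by rw [← div_pow, div_div_eq_mul_div]

theorem sum_range_succ_choose_mul_pow_le {d i : ℕ} {m : ℝ} (hm : 1 ≤ m) (hdi : d < i) :
    ∑ j ∈ range (d + 1), (i.choose j : ℝ) * (2 * m) ^ j ≤ (exp 1 * i * m) ^ d := by
  have he : 2.7 < exp 1 := by have := exp_one_gt_d9; norm_num at this ⊢; linarith
  rcases Nat.lt_trichotomy d 1 with hd | rfl | hd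
  · obtain rfl : d = 0 := by omega
    simp
  · have hi : (2 : ℝ) ≤ i := by exact_mod_cast hdi
    simp only [sum_range_succ, range_one, sum_singleton, Nat.choose_zero_right,
      Nat.choose_one_right, pow_zero, pow_one, Nat.cast_one]
    have him : 2 ≤ (i : ℝ) * m := by nlinarith
    nlinarith [mul_lt_mul_of_pos_right he (by positivity : 0 < (i : ℝ) * m)]
  · calc ∑ j ∈ range (d + 1), (i.choose j : ℝ) * (2 * m) ^ j
        ≤ ∑ j ∈ range (d + 1), (i.choose j : ℝ) * (2 * m) ^ d := by
          gcongr with j hj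
          · linarith
          · exact mem_range_succ_iff.mp hj
      _ ≤ (exp 1 * i / d) ^ d * (2 * m) ^ d := by
          rw [← sum_mul]
          gcongr
          exact sum_range_succ_choose_le_exp_mul_div_pow (by omega) hdi.le
      _ = (2 / d * (exp 1 * i * m)) ^ d := by rw [← mul_pow]; ring
      _ ≤ (exp 1 * i * m) ^ d := by
          refine pow_le_pow_left₀ (by positivity) (mul_le_of_le_one_left (by positivity) ?_) d
          exact (div_le_one (by positivity)).mpr (by exact_mod_cast hd)

section Complexification

variable {m n : Type*} [Fintype m] [Fintype n]

theorem EuclideanSpace.norm_sq_eq_norm_sq_re_add_norm_sq_im (w : EuclideanSpace ℂ n) :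
    ‖w‖ ^ 2 = ‖toLp 2 fun i => (w i).re‖ ^ 2 + ‖toLp 2 fun i => (w i).im‖ ^ 2 := by
  simp only [EuclideanSpace.norm_sq_eq, ← sum_add_distrib, Real.norm_eq_abs, sq_abs,
    Complex.sq_norm, Complex.normSq_apply]
  exact sum_congr rfl fun _ _ => by ring

theorem Matrix.norm_sq_map_ofReal_mulVec (A : Matrix m n ℝ) (z : EuclideanSpace ℂ n) :
    ‖toLp 2 (A.map Complex.ofReal *ᵥ ofLp z)‖ ^ 2 =
      ‖toLp 2 (A *ᵥ fun i => (z i).re)‖ ^ 2 + ‖toLp 2 (A *ᵥ fun i => (z i).im)‖ ^ 2 := by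
  rw [EuclideanSpace.norm_sq_eq_norm_sq_re_add_norm_sq_im]
  congr 4 <;> ext j <;> simp [mulVec, dotProduct, Complex.re_sum, Complex.im_sum]

variable [DecidableEq n]

theorem Matrix.norm_toLp_mulVec_le {𝕜 : Type*} [RCLike 𝕜] (A : Matrix m n 𝕜) (x : n → 𝕜) :
    ‖toLp 2 (A *ᵥ x)‖ ≤ ‖A‖ * ‖toLp 2 x‖ :=
  A.l2_opNorm_mulVec (toLp 2 x)

theorem Matrix.l2_opNorm_map_ofReal (A : Matrix m n ℝ) : ‖A.map Complex.ofReal‖ = ‖A‖ := by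
  apply le_antisymm
  · refine ContinuousLinearMap.opNorm_le_bound _ (norm_nonneg A) fun z => ?_
    refine (sq_le_sq₀ (norm_nonneg _) (by positivity)).mp ?_
    change ‖toLp 2 (A.map Complex.ofReal *ᵥ ofLp z)‖ ^ 2 ≤ _
    calc _ = _ := norm_sq_map_ofReal_mulVec A z
      _ ≤ (‖A‖ * ‖toLp 2 fun i => (z i).re‖) ^ 2 + (‖A‖ * ‖toLp 2 fun i => (z i).im‖) ^ 2 := by
        gcongr <;> exact A.norm_toLp_mulVec_le _
      _ = (‖A‖ * ‖z‖) ^ 2 := by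
        rw [mul_pow ‖A‖ ‖z‖, EuclideanSpace.norm_sq_eq_norm_sq_re_add_norm_sq_im z]; ring
  · refine ContinuousLinearMap.opNorm_le_bound _ (norm_nonneg _) fun x => ?_
    set z : EuclideanSpace ℂ n := toLp 2 fun i => (x i : ℂ)
    have hz : ‖z‖ = ‖x‖ := by
      rw [← sq_eq_sq₀ (norm_nonneg _) (norm_nonneg _),
        EuclideanSpace.norm_sq_eq_norm_sq_re_add_norm_sq_im]
      simp [z, ← Pi.zero_def]
    refine (sq_le_sq₀ (norm_nonneg _) (by positivity)).mp ?_
    calc ‖toLp 2 (A *ᵥ ofLp x)‖ ^ 2 = ‖toLp 2 (A.map Complex.ofReal *ᵥ ofLp z)‖ ^ 2 := by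
          rw [norm_sq_map_ofReal_mulVec]; simp [z, ← Pi.zero_def]
      _ ≤ _ := by
        rw [← hz]; gcongr; exact (A.map Complex.ofReal).norm_toLp_mulVec_le _

end Complexification

section Powers

variable {ι : Type*} [Fintype ι] [DecidableEq ι]

theorem Matrix.prod_sub_algebraMap_roots_charpoly {K : Type*} [Field K] [IsAlgClosed K]
    (B : Matrix ι ι K) :
    (B.charpoly.roots.toList.map fun μ => B - algebraMap K _ μ).prod = 0 := by
  have hsplit := (IsAlgClosed.splits B.charpoly).eq_prod_roots_of_monic B.charpoly_monic
  rw [← Multiset.coe_toList B.charpoly.roots, Multiset.map_coe, Multiset.prod_coe] at hsplit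
  rw [← aeval_self_charpoly B, hsplit, map_list_prod, List.map_map]
  simp [Function.comp_def]

theorem Matrix.l2_opNorm_one_le {𝕜 : Type*} [RCLike 𝕜] : ‖(1 : Matrix ι ι 𝕜)‖ ≤ 1 := by
  rw [cstar_norm_def, map_one]
  exact ContinuousLinearMap.norm_id_le

theorem Matrix.l2_opNorm_pow_le_sum_choose (B : Matrix ι ι ℂ)
    (hB : ∀ μ ∈ spectrum ℂ B, ‖μ‖ ≤ 1) (i : ℕ) :
    ‖B ^ i‖ ≤ ∑ j ∈ range (Fintype.card ι), (i.choose j : ℝ) * (‖B‖ + 1) ^ j := by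
  have hroots : ∀ μ ∈ B.charpoly.roots.toList, ‖μ‖ ≤ 1 := fun μ hμ => by
    rw [Multiset.mem_toList, mem_roots B.charpoly_monic.ne_zero] at hμ
    exact hB μ (mem_spectrum_iff_isRoot_charpoly.mpr hμ)
  have hsub : ∀ μ ∈ B.charpoly.roots.toList, ‖B - algebraMap ℂ _ μ‖ ≤ ‖B‖ + 1 := fun μ hμ =>
    calc _ ≤ ‖B‖ + ‖μ‖ * ‖(1 : Matrix ι ι ℂ)‖ := (norm_sub_le _ _).trans_eq (by rw [norm_algebraMap])
      _ ≤ ‖B‖ + 1 := by gcongr; exact mul_le_one₀ (hroots μ hμ) (norm_nonneg _) l2_opNorm_one_le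
  have := norm_mul_pow_le_of_mul_prod_eq_zero _ hroots hsub
    (by rw [one_mul]; exact B.prod_sub_algebraMap_roots_charpoly) i
  rw [one_mul, Multiset.length_toList, IsAlgClosed.card_roots_eq_natDegree,
    charpoly_natDegree_eq_dim] at this
  exact this.trans (mul_le_of_le_one_right (by positivity) l2_opNorm_one_le)

theorem Matrix.l2_opNorm_pow_le (A : Matrix ι ι ℝ)
    (hA : ∀ μ ∈ spectrum ℂ (A.map Complex.ofReal), ‖μ‖ ≤ 1) {d : ℕ} (hd : Fintype.card ι = d + 1)
    {m : ℝ} (hAm : ‖A‖ ≤ m) (hm : 1 ≤ m) {i : ℕ} (hi : 0 < i) :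
    ‖A ^ i‖ ≤ (exp 1 * i * m) ^ d := by
  have hei : 1 ≤ exp 1 * i := one_le_mul_of_one_le_of_one_le (one_le_exp zero_le_one)
    (by exact_mod_cast hi)
  rcases lt_or_ge d i with hdi | hid
  · have hpow : (A ^ i).map Complex.ofReal = (A.map Complex.ofReal) ^ i :=
      map_pow Complex.ofRealHom.mapMatrix A i
    calc ‖A ^ i‖ = ‖(A.map Complex.ofReal) ^ i‖ := by rw [← hpow, l2_opNorm_map_ofReal]
      _ ≤ ∑ j ∈ range (d + 1), (i.choose j : ℝ) * (‖A.map Complex.ofReal‖ + 1) ^ j :=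
          hd ▸ l2_opNorm_pow_le_sum_choose _ hA i
      _ ≤ ∑ j ∈ range (d + 1), (i.choose j : ℝ) * (2 * m) ^ j := by
          gcongr
          rw [l2_opNorm_map_ofReal]
          linarith
      _ ≤ (exp 1 * i * m) ^ d := sum_range_succ_choose_mul_pow_le hm hdi
  · calc ‖A ^ i‖ ≤ ‖A‖ ^ i := norm_pow_le' A hi
      _ ≤ m ^ d := (pow_le_pow_left₀ (norm_nonneg A) hAm i).trans (pow_le_pow_right₀ hm hid)
      _ ≤ (exp 1 * i * m) ^ d := by gcongr; exact le_mul_of_one_le_left (by linarith) hei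

theorem Matrix.l2_opNorm_pow_le_of_lt (A : Matrix ι ι ℝ)
    (hA : ∀ μ ∈ spectrum ℂ (A.map Complex.ofReal), ‖μ‖ ≤ 1) {d : ℕ} (hd : Fintype.card ι = d + 1)
    {m : ℝ} (hAm : ‖A‖ ≤ m) (hm : 1 ≤ m) {i k : ℕ} (hik : i < k) :
    ‖A ^ i‖ ≤ (exp 1 * k * m) ^ d := by
  have hk : (1 : ℝ) ≤ k := by exact_mod_cast hik.pos
  rcases Nat.eq_zero_or_pos i with rfl | hi
  · rw [pow_zero]
    refine l2_opNorm_one_le.trans (one_le_pow₀ ?_)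
    exact one_le_mul_of_one_le_of_one_le
      (one_le_mul_of_one_le_of_one_le (one_le_exp zero_le_one) hk) hm
  · refine (A.l2_opNorm_pow_le hA hd hAm hm hi).trans ?_
    gcongr

end Powers

theorem specNorm_eq_l2_opNorm {m n : Type*} [Fintype m] [Fintype n] [DecidableEq n]
    (A : Matrix m n ℝ) : specNorm A = ‖A‖ := rfl

theorem Matrix.l2_opNorm_mul_transpose_self {m n : Type*} [Fintype m] [Fintype n] [DecidableEq m]
    [DecidableEq n] (B : Matrix m n ℝ) : ‖B * Bᵀ‖ = ‖B‖ ^ 2 := by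
  rw [← conjTranspose_eq_transpose_of_trivial, sq, ← l2_opNorm_conjTranspose B]
  simpa using l2_opNorm_conjTranspose_mul_self Bᴴ

theorem specNorm_gramian_le {n r : ℕ} (A : Matrix (Fin n) (Fin n) ℝ)
    (H : Matrix (Fin n) (Fin r) ℝ) (k : ℕ) :
    specNorm (gramian A H k) ≤ ∑ i ∈ range k, (‖A ^ i‖ * ‖H‖) ^ 2 := by
  rw [specNorm_eq_l2_opNorm, gramian]
  refine (norm_sum_le _ _).trans (sum_le_sum fun i _ => ?_)
  have hterm : A ^ i * H * Hᵀ * Aᵀ ^ i = (A ^ i * H) * (A ^ i * H)ᵀ := by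
    rw [transpose_mul, transpose_pow, Matrix.mul_assoc]
  rw [hterm, l2_opNorm_mul_transpose_self]
  gcongr
  exact l2_opNorm_mul _ _

theorem gramian_upper_bound_general {n r : ℕ}
    (A : Matrix (Fin n) (Fin n) ℝ) (H : Matrix (Fin n) (Fin r) ℝ) (M : ℝ)
    (hspec : ∀ μ ∈ spectrum ℂ (A.map (Complex.ofReal)), ‖μ‖ ≤ 1)
    (hA : specNorm A ≤ M) (hH : specNorm H ≤ M) (k : ℕ) :
    specNorm (gramian A H k) ≤
      Real.exp 1 ^ (2 * n - 2) * (k : ℝ) ^ (2 * n - 1) * max (M ^ (2 * n)) 1 := by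
  obtain _ | d := n
  · rw [Subsingleton.elim (gramian A H k) 0, specNorm_eq_l2_opNorm, norm_zero]
    positivity
  have hM : 0 ≤ M := (norm_nonneg A).trans hA
  set m := max M 1
  have hMm : M ≤ m := le_max_left M 1
  have hterm : ∀ i ∈ range k, ‖A ^ i‖ * ‖H‖ ≤ (exp 1 * k * m) ^ d * m := fun i hi =>
    mul_le_mul (A.l2_opNorm_pow_le_of_lt hspec (Fintype.card_fin _) (hA.trans hMm)
      (le_max_right M 1) (mem_range.mp hi)) (hH.trans hMm) (norm_nonneg H) (by positivity)
  have hmax : m ^ (2 * (d + 1)) = max (M ^ (2 * (d + 1))) 1 := by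
    rcases le_total M 1 with h | h
    · simp [m, max_eq_right h, max_eq_right (pow_le_one₀ hM h)]
    · simp [m, max_eq_left h, max_eq_left (one_le_pow₀ h)]
  calc specNorm (gramian A H k) ≤ ∑ i ∈ range k, (‖A ^ i‖ * ‖H‖) ^ 2 := specNorm_gramian_le A H k
    _ ≤ ∑ i ∈ range k, ((exp 1 * k * m) ^ d * m) ^ 2 :=
        sum_le_sum fun i hi => pow_le_pow_left₀ (by positivity) (hterm i hi) 2
    _ = exp 1 ^ (2 * (d + 1) - 2) * (k : ℝ) ^ (2 * (d + 1) - 1) * m ^ (2 * (d + 1)) := by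
        rw [sum_const, card_range, nsmul_eq_mul, show 2 * (d + 1) - 2 = 2 * d by omega,
          show 2 * (d + 1) - 1 = 2 * d + 1 by omega]
        ring
    _ = _ := by rw [hmax]

theorem gramian_upper_bound {n r : ℕ} (hr : r ≤ n)
    (A : Matrix (Fin n) (Fin n) ℝ) (H : Matrix (Fin n) (Fin r) ℝ) (M : ℝ)
    (hspec : ∀ μ ∈ spectrum ℂ (A.map (Complex.ofReal)), ‖μ‖ ≤ 1)
    (hA : specNorm A ≤ M) (hH : specNorm H ≤ M) (k : ℕ) :
    specNorm (gramian A H k) ≤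
      Real.exp 1 ^ (2 * n - 2) * (k : ℝ) ^ (2 * n - 1) * max (M ^ (2 * n)) 1 :=
  gramian_upper_bound_general A H M hspec hA hH k
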